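/- arXiv:2106.04881 — 2 statements merged into one kernel-verified Lean document; each statement's English description precedes it below -/
import Mathlib

section
/- Consider the regularized logistic regression loss ℓ(w,(a,y)) = log(1 + exp(−y aᵀw)) + λ‖w‖²/2 with λ > 0, data z_i = (a_i,y_i) with y_i ∈ {−1,+1}, R := max_i ‖a_i‖ satisfying R < 2√(mλ/M), and preconditioned SGD with a fixed symmetric positive definite matrix H satisfying mI ⪯ H ⪯ MI for some 0 < m ≤ M. Assume the step-size satisfies 0 < η < m/λ. Let μ be any Borel probability measure on ℝ^d invariant under the preconditioned SGD iterated function system with batch size b (so m_b = n/b batches). Then dim̄_H μ ≤ log(n/b) / log(1/(1 − η M^{−1} λ + (1/4) η m^{−1} R²)). -/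
/-!
Write `h i w = w - ηλ H⁻¹ w - (η/b) H⁻¹ ∑_{j ∈ S i} g_j w`, where
`g_j w = -y_j σ(-y_j ⟪a_j, w⟫) a_j` is the gradient of the unregularized loss. Diagonalizing `H`
gives `‖I - ηλ H⁻¹‖ ≤ 1 - ηλ/M` and `‖H⁻¹‖ ≤ 1/m`, and `g_j` is `R²/4`-Lipschitz because the
sigmoid `σ` is `1/4`-Lipschitz, so every `h i` is a contraction of ratio
`r = 1 - ηλ/M + ηR²/(4m) < 1`.

For an iterated function system of `m_b` contractions of ratio `r` and a closed ball `B` with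
`F B ⊆ B`, `F` the Hutchinson operator, an invariant probability measure gives `⋂ N, F^N B` at least
the mass of `B`. That set is covered by `m_b^N` images of `B` of diameter `r^N diam B`, so its
Hausdorff dimension is at most `log m_b / log (1/r)`, and countably many such sets carry full mass.
-/

open MeasureTheory Filter
open scoped ENNReal RealInnerProductSpace

/-- The upper Hausdorff dimension of a measure:
`dim̄_H μ := inf {dim_H A : A Borel, μ A = 1}`. -/
noncomputable def upperHausdorffDim {X : Type*} [EMetricSpace X] [MeasurableSpace X]
    (μ : Measure X) : ℝ≥0∞ :=
  ⨅ (A : Set X) (_ : MeasurableSet A) (_ : μ A = 1), dimH A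

open scoped NNReal Topology Finset
open Real

theorem OrthonormalBasis.norm_apply_le_of_apply_eq_smul {ι E : Type*} [Fintype ι]
    [DecidableEq ι] [NormedAddCommGroup E] [InnerProductSpace ℝ E] (B : OrthonormalBasis ι ℝ E)
    (L : E →ₗ[ℝ] E) (c : ι → ℝ) (hL : ∀ k, L (B k) = c k • B k) {C : ℝ} (hC : 0 ≤ C)
    (hc : ∀ k, |c k| ≤ C) (v : E) : ‖L v‖ ≤ C * ‖v‖ := by
  have hcoord i : ⟪B i, L v⟫ = c i * ⟪B i, v⟫ := by
    conv_lhs => rw [← B.sum_repr' v]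
    simp [hL, inner_sum, inner_smul_right, B.inner_eq_ite, mul_comm]
  refine le_of_sq_le_sq ?_ (by positivity)
  calc ‖L v‖ ^ 2 = ∑ i, c i ^ 2 * ⟪B i, v⟫ ^ 2 := by
        rw [← B.sum_sq_inner_right]; simp only [hcoord, mul_pow]
    _ ≤ ∑ i, C ^ 2 * ⟪B i, v⟫ ^ 2 := by
        refine Finset.sum_le_sum fun i _ => mul_le_mul_of_nonneg_right ?_ (sq_nonneg _)
        exact sq_le_sq.2 ((hc i).trans (le_abs_self C))
    _ = (C * ‖v‖) ^ 2 := by rw [← Finset.mul_sum, B.sum_sq_inner_right, mul_pow]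

namespace Matrix.IsHermitian
variable {n : Type*} [Fintype n] [DecidableEq n] {A : Matrix n n ℝ}

theorem eigenvectorBasis_dotProduct_self (hA : A.IsHermitian) (k : n) :
    (hA.eigenvectorBasis k).ofLp ⬝ᵥ (hA.eigenvectorBasis k).ofLp = 1 := by
  have h : ⟪hA.eigenvectorBasis k, hA.eigenvectorBasis k⟫ = 1 := by
    rw [real_inner_self_eq_norm_sq, hA.eigenvectorBasis.orthonormal.1 k, one_pow]
  rwa [EuclideanSpace.inner_eq_star_dotProduct, star_trivial] at h

theorem eigenvectorBasis_dotProduct_sub_smul_one_mulVec (hA : A.IsHermitian) (c : ℝ) (k : n) :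
    (hA.eigenvectorBasis k).ofLp ⬝ᵥ ((A - c • 1) *ᵥ (hA.eigenvectorBasis k).ofLp) =
      hA.eigenvalues k - c := by
  rw [sub_mulVec, hA.mulVec_eigenvectorBasis, smul_mulVec, one_mulVec, ← sub_smul,
    dotProduct_smul, hA.eigenvectorBasis_dotProduct_self, smul_eq_mul, mul_one]

theorem le_eigenvalues (hA : A.IsHermitian) {c : ℝ} (h : (A - c • 1).PosSemidef) (k : n) :
    c ≤ hA.eigenvalues k := by
  have := h.dotProduct_mulVec_nonneg (hA.eigenvectorBasis k)
  rw [star_trivial, hA.eigenvectorBasis_dotProduct_sub_smul_one_mulVec] at this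
  linarith

theorem eigenvalues_le (hA : A.IsHermitian) {c : ℝ} (h : (c • 1 - A).PosSemidef) (k : n) :
    hA.eigenvalues k ≤ c := by
  have := h.dotProduct_mulVec_nonneg (hA.eigenvectorBasis k)
  rw [star_trivial, ← neg_sub, neg_mulVec, dotProduct_neg,
    hA.eigenvectorBasis_dotProduct_sub_smul_one_mulVec] at this
  linarith

theorem toEuclideanLin_inv_eigenvectorBasis (hA : A.IsHermitian) (h0 : ∀ k, hA.eigenvalues k ≠ 0)
    (k : n) :
    toEuclideanLin A⁻¹ (hA.eigenvectorBasis k) =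
      (hA.eigenvalues k)⁻¹ • hA.eigenvectorBasis k := by
  have : Invertible A := invertibleOfIsUnitDet A <| by
    simpa [hA.det_eq_prod_eigenvalues, Finset.prod_ne_zero_iff] using h0
  apply WithLp.ofLp_injective
  refine inv_mulVec_eq_vec ?_
  rw [WithLp.ofLp_smul, mulVec_smul, hA.mulVec_eigenvectorBasis, smul_smul,
    inv_mul_cancel₀ (h0 k), one_smul]
  rfl

theorem norm_toEuclideanLin_inv_le (hA : A.IsHermitian) {c : ℝ} (hc : 0 < c)
    (h : (A - c • 1).PosSemidef) (v : EuclideanSpace ℝ n) : ‖toEuclideanLin A⁻¹ v‖ ≤ c⁻¹ * ‖v‖ := by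
  have hpos k : 0 < hA.eigenvalues k := hc.trans_le (hA.le_eigenvalues h k)
  refine hA.eigenvectorBasis.norm_apply_le_of_apply_eq_smul _ (fun k => (hA.eigenvalues k)⁻¹)
    (hA.toEuclideanLin_inv_eigenvectorBasis fun k => (hpos k).ne') (inv_nonneg.2 hc.le)
    (fun k => ?_) v
  rw [abs_of_pos (inv_pos.2 (hpos k))]
  exact inv_anti₀ hc (hA.le_eigenvalues h k)

theorem norm_sub_smul_toEuclideanLin_inv_le (hA : A.IsHermitian) {c C t : ℝ} (hc : 0 < c)
    (hcC : c ≤ C) (hlow : (A - c • 1).PosSemidef) (hhigh : (C • 1 - A).PosSemidef) (ht : 0 ≤ t)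
    (htc : t ≤ c) (v : EuclideanSpace ℝ n) :
    ‖v - t • toEuclideanLin A⁻¹ v‖ ≤ (1 - t / C) * ‖v‖ := by
  have hpos k : 0 < hA.eigenvalues k := hc.trans_le (hA.le_eigenvalues hlow k)
  let L : EuclideanSpace ℝ n →ₗ[ℝ] EuclideanSpace ℝ n := LinearMap.id - t • toEuclideanLin A⁻¹
  have heigen k : L (hA.eigenvectorBasis k) =
      (1 - t / hA.eigenvalues k) • hA.eigenvectorBasis k := by
    rw [LinearMap.sub_apply, LinearMap.smul_apply, LinearMap.id_apply,
      hA.toEuclideanLin_inv_eigenvectorBasis fun k => (hpos k).ne', smul_smul, sub_smul, one_smul,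
      div_eq_mul_inv]
  have hbound k : |1 - t / hA.eigenvalues k| ≤ 1 - t / C := by
    have hle : t / hA.eigenvalues k ≤ 1 :=
      (div_le_one (hpos k)).2 (htc.trans (hA.le_eigenvalues hlow k))
    rw [abs_of_nonneg (sub_nonneg.2 hle)]
    exact sub_le_sub_left (div_le_div_of_nonneg_left ht (hpos k) (hA.eigenvalues_le hhigh k)) 1
  have hC : 0 ≤ 1 - t / C := sub_nonneg.2 ((div_le_one (hc.trans_le hcC)).2 (htc.trans hcC))
  exact hA.eigenvectorBasis.norm_apply_le_of_apply_eq_smul L _ heigen hC hbound v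

end Matrix.IsHermitian

theorem Real.lipschitzWith_sigmoid : LipschitzWith 4⁻¹ sigmoid := by
  refine lipschitzWith_of_nnnorm_deriv_le differentiable_sigmoid fun x => ?_
  rw [deriv_sigmoid, ← NNReal.coe_le_coe, coe_nnnorm, Real.norm_eq_abs,
    abs_of_nonneg (mul_nonneg (sigmoid_nonneg x) (sub_nonneg.2 (sigmoid_le_one x)))]
  push_cast
  nlinarith [sq_nonneg (sigmoid x - 2⁻¹)]

theorem Real.hasDerivAt_log_one_add_exp_neg_mul (y t : ℝ) :
    HasDerivAt (fun t => log (1 + exp (-y * t))) (-y * sigmoid (-y * t)) t := by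
  have h := (((hasDerivAt_id' t).const_mul (-y)).exp.const_add 1).log (by positivity)
  convert h using 1
  rw [sigmoid_def, exp_neg (-y * t)]
  field_simp
  ring

section logistic
variable {F : Type*} [NormedAddCommGroup F] [InnerProductSpace ℝ F]

noncomputable def logisticLoss (lam : ℝ) (a : F) (y : ℝ) (w : F) : ℝ :=
  log (1 + exp (-y * ⟪a, w⟫)) + lam * ‖w‖ ^ 2 / 2

noncomputable def logisticDataGrad (a : F) (y : ℝ) (w : F) : F :=
  (-y * sigmoid (-y * ⟪a, w⟫)) • a

theorem hasGradientAt_logisticLoss [CompleteSpace F] (lam : ℝ) (a : F) (y : ℝ) (w : F) :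
    HasGradientAt (logisticLoss lam a y) (logisticDataGrad a y w + lam • w) w := by
  rw [hasGradientAt_iff_hasFDerivAt, map_add, logisticDataGrad, map_smul, map_smul]
  have h1 := (hasDerivAt_log_one_add_exp_neg_mul y ⟪a, w⟫).comp_hasFDerivAt w
    (innerSL ℝ a).hasFDerivAt
  have h2 := (hasStrictFDerivAt_norm_sq w).hasFDerivAt.const_mul (lam / 2)
  have hfun : logisticLoss lam a y =
      ((fun t => log (1 + exp (-y * t))) ∘ inner ℝ a) + fun w => lam / 2 * ‖w‖ ^ 2 := by
    ext w
    simp only [logisticLoss, Function.comp_apply, Pi.add_apply]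
    ring
  rw [hfun]
  refine (h1.add h2).congr_fderiv ?_
  ext v
  simp
  ring

theorem norm_logisticDataGrad_sub_le {a : F} {R : ℝ} (ha : ‖a‖ ≤ R) {y : ℝ} (hy : |y| = 1)
    (w w' : F) : ‖logisticDataGrad a y w - logisticDataGrad a y w'‖ ≤ R ^ 2 / 4 * ‖w - w'‖ := by
  have hu : ‖-y * ⟪a, w⟫ - -y * ⟪a, w'⟫‖ ≤ ‖a‖ * ‖w - w'‖ := by
    rw [← mul_sub, ← inner_sub_right, norm_mul, norm_neg, Real.norm_eq_abs, hy, one_mul]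
    exact norm_inner_le_norm _ _
  rw [logisticDataGrad, logisticDataGrad, ← sub_smul, norm_smul, ← mul_sub, norm_mul, norm_neg,
    Real.norm_eq_abs, hy, one_mul]
  calc ‖sigmoid (-y * ⟪a, w⟫) - sigmoid (-y * ⟪a, w'⟫)‖ * ‖a‖
      ≤ 4⁻¹ * (‖a‖ * ‖w - w'‖) * ‖a‖ := by
        gcongr
        exact (lipschitzWith_sigmoid.norm_sub_le _ _).trans (by push_cast; gcongr)
    _ = ‖a‖ ^ 2 / 4 * ‖w - w'‖ := by ring
    _ ≤ R ^ 2 / 4 * ‖w - w'‖ := by gcongr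

end logistic

section precondStep
variable {E ι : Type*} [NormedAddCommGroup E] [NormedSpace ℝ E]

noncomputable def precondStep (P : E →ₗ[ℝ] E) (η : ℝ) (S : Finset ι) (G : ι → E → E) (w : E) :
    E :=
  w - (η / #S) • P (∑ j ∈ S, G j w)

theorem precondStep_sub_precondStep (P : E →ₗ[ℝ] E) (η lam : ℝ) {S : Finset ι} (hS : S.Nonempty)
    (g : ι → E → E) (w w' : E) :
    precondStep P η S (fun j w => g j w + lam • w) w -
        precondStep P η S (fun j w => g j w + lam • w) w' =
      ((w - w') - (η * lam) • P (w - w')) - (η / #S) • P (∑ j ∈ S, (g j w - g j w')) := by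
  have hS0 : (#S : ℝ) ≠ 0 := by exact_mod_cast hS.card_pos.ne'
  simp only [precondStep, Finset.sum_add_distrib, Finset.sum_const, Finset.sum_sub_distrib, map_add,
    map_sub, map_nsmul, map_smul, smul_add, smul_sub]
  rw [← Nat.cast_smul_eq_nsmul ℝ, ← Nat.cast_smul_eq_nsmul ℝ, smul_smul, smul_smul, smul_smul,
    smul_smul]
  field_simp
  module

theorem norm_precondStep_sub_le (P : E →ₗ[ℝ] E) {η lam α β K : ℝ} {S : Finset ι}
    (hS : S.Nonempty) (hη : 0 ≤ η) (hβ : 0 ≤ β)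
    (hα : ∀ v, ‖v - (η * lam) • P v‖ ≤ α * ‖v‖) (hP : ∀ v, ‖P v‖ ≤ β * ‖v‖)
    (g : ι → E → E) (hg : ∀ j ∈ S, ∀ w w', ‖g j w - g j w'‖ ≤ K * ‖w - w'‖) (w w' : E) :
    ‖precondStep P η S (fun j w => g j w + lam • w) w -
        precondStep P η S (fun j w => g j w + lam • w) w'‖ ≤ (α + η * β * K) * ‖w - w'‖ := by
  have hS0 : (0 : ℝ) < #S := by exact_mod_cast hS.card_pos
  have hsum : ‖∑ j ∈ S, (g j w - g j w')‖ ≤ #S * (K * ‖w - w'‖) := by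
    refine (norm_sum_le _ _).trans ?_
    simpa using Finset.sum_le_card_nsmul S _ _ (fun j hj => hg j hj w w')
  rw [precondStep_sub_precondStep P η lam hS]
  calc _ ≤ ‖(w - w') - (η * lam) • P (w - w')‖ +
        (η / #S) * ‖P (∑ j ∈ S, (g j w - g j w'))‖ := by
        refine (norm_sub_le _ _).trans_eq ?_
        rw [norm_smul, Real.norm_of_nonneg (by positivity)]
    _ ≤ α * ‖w - w'‖ + (η / #S) * (β * (#S * (K * ‖w - w'‖))) := by
        gcongr
        · exact hα _
        · exact (hP _).trans (by gcongr)
    _ = (α + η * β * K) * ‖w - w'‖ := by field_simp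

end precondStep

theorem natCast_mul_rpow_lt_one {m : ℕ} {r s : ℝ} (hr0 : 0 < r) (hr1 : r < 1)
    (hs : log m / log (1 / r) < s) : (m : ℝ) * r ^ s < 1 := by
  rcases Nat.eq_zero_or_pos m with rfl | hm
  · simp
  have hlog : 0 < log (1 / r) := log_pos (one_lt_one_div hr0 hr1)
  rw [div_lt_iff₀ hlog, one_div, log_inv, mul_neg, lt_neg_iff_add_neg, ← log_rpow hr0,
    ← log_mul (by positivity) (by positivity)] at hs
  exact (log_neg_iff (by positivity)).1 hs

section covers
variable {X : Type*} [EMetricSpace X]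

theorem hausdorffMeasure_eq_zero_of_forall_subset_iUnion_geometric [MeasurableSpace X]
    [BorelSpace X] {A : Set X} {m : ℕ} {r : ℝ≥0} (hr1 : r < 1) {D : ℝ≥0∞} (hD : D ≠ ∞)
    (U : (N : ℕ) → (Fin N → Fin m) → Set X) (hU : ∀ N w, Metric.ediam (U N w) ≤ r ^ N * D)
    (hA : ∀ N, A ⊆ ⋃ w, U N w) {s : ℝ} (hs : 0 ≤ s) (hρ : (m : ℝ≥0) * r ^ s < 1) :
    μH[s] A = 0 := by
  set ρ : ℝ≥0 := m * r ^ s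
  have hsum N : ∑ w, Metric.ediam (U N w) ^ s ≤ (ρ : ℝ≥0∞) ^ N * D ^ s := by
    have hpow : ((r : ℝ≥0∞) ^ N) ^ s = ((r : ℝ≥0∞) ^ s) ^ N := by
      rw [← ENNReal.rpow_natCast, ← ENNReal.rpow_natCast, ← ENNReal.rpow_mul, ← ENNReal.rpow_mul,
        mul_comm]
    calc ∑ w, Metric.ediam (U N w) ^ s ≤ ∑ _w : Fin N → Fin m, ((r : ℝ≥0∞) ^ N * D) ^ s := by
          gcongr with w; exact hU N w
      _ = (ρ : ℝ≥0∞) ^ N * D ^ s := by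
          simp only [Finset.sum_const, Finset.card_univ, Fintype.card_fun, Fintype.card_fin,
            nsmul_eq_mul, ENNReal.mul_rpow_of_nonneg _ _ hs, hpow, ρ, ENNReal.coe_mul,
            ENNReal.coe_rpow_of_nonneg _ hs, mul_pow]
          push_cast
          ring
  have hlim : Tendsto (fun N => (ρ : ℝ≥0∞) ^ N * D ^ s) atTop (𝓝 0) := by
    simpa using ENNReal.Tendsto.mul_const
      (ENNReal.tendsto_pow_atTop_nhds_zero_of_lt_one (by exact_mod_cast hρ))
      (Or.inr (ENNReal.rpow_ne_top_of_nonneg hs hD))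
  have hr : Tendsto (fun N => (r : ℝ≥0∞) ^ N * D) atTop (𝓝 0) := by
    simpa using ENNReal.Tendsto.mul_const
      (ENNReal.tendsto_pow_atTop_nhds_zero_of_lt_one (by exact_mod_cast hr1)) (Or.inr hD)
  refine le_antisymm ?_ bot_le
  calc μH[s] A ≤ liminf (fun N => ∑ w, Metric.ediam (U N w) ^ s) atTop :=
        Measure.hausdorffMeasure_le_liminf_sum _ A _ hr U (.of_forall hU) (.of_forall hA)
    _ ≤ liminf (fun N => (ρ : ℝ≥0∞) ^ N * D ^ s) atTop := liminf_le_liminf (.of_forall hsum)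
    _ = 0 := hlim.liminf_eq

theorem dimH_le_of_forall_subset_iUnion_geometric {A : Set X} {m : ℕ} {r : ℝ≥0} (hr0 : 0 < r)
    (hr1 : r < 1) {D : ℝ≥0∞} (hD : D ≠ ∞) (U : (N : ℕ) → (Fin N → Fin m) → Set X)
    (hU : ∀ N w, Metric.ediam (U N w) ≤ r ^ N * D) (hA : ∀ N, A ⊆ ⋃ w, U N w) :
    dimH A ≤ ENNReal.ofReal (log m / log (1 / r)) := by
  borelize X
  refine dimH_le fun s hs => le_of_not_gt fun hlt => ?_
  have hρ : (m : ℝ≥0) * r ^ (s : ℝ) < 1 := by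
    rw [← NNReal.coe_lt_coe]
    push_cast
    refine natCast_mul_rpow_lt_one hr0 hr1 ((ENNReal.ofReal_lt_coe_iff ?_).1 hlt)
    exact div_nonneg (log_natCast_nonneg m) (log_nonneg (one_le_one_div hr0 hr1.le))
  exact ENNReal.zero_ne_top <|
    (hausdorffMeasure_eq_zero_of_forall_subset_iUnion_geometric hr1 hD U hU hA s.2 hρ).symm.trans hs

end covers

section hutchinson
variable {X : Type*} {m : ℕ} (f : Fin m → X → X)

def hutchinson (K : Set X) : Set X := ⋃ i, f i '' K

def wordMap : (N : ℕ) → (Fin N → Fin m) → X → X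
  | 0, _ => id
  | N + 1, w => f (w 0) ∘ wordMap N (Fin.tail w)

theorem monotone_hutchinson : Monotone (hutchinson f) :=
  fun _ _ hKL => Set.iUnion_mono fun _ => Set.image_mono hKL

theorem iterate_hutchinson_subset_iUnion_wordMap (B : Set X) (N : ℕ) :
    (hutchinson f)^[N] B ⊆ ⋃ w, wordMap f N w '' B := by
  induction N with
  | zero => exact Set.subset_iUnion_of_subset Fin.elim0 (by simp [wordMap])
  | succ N ih =>
    rw [Function.iterate_succ_apply']
    refine Set.iUnion_subset fun i => (Set.image_mono ih).trans ?_
    rw [Set.image_iUnion]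
    refine Set.iUnion_subset fun w => Set.subset_iUnion_of_subset (Fin.cons i w) ?_
    simp [wordMap, Set.image_comp]

theorem isCompact_iterate_hutchinson [TopologicalSpace X] (hf : ∀ i, Continuous (f i))
    {B : Set X} (hB : IsCompact B) (N : ℕ) : IsCompact ((hutchinson f)^[N] B) := by
  induction N with
  | zero => exact hB
  | succ N ih =>
    rw [Function.iterate_succ_apply']
    exact isCompact_iUnion fun i => ih.image (hf i)

theorem lipschitzWith_wordMap [PseudoEMetricSpace X] {r : ℝ≥0} (hf : ∀ i, LipschitzWith r (f i))
    (N : ℕ) (w : Fin N → Fin m) : LipschitzWith (r ^ N) (wordMap f N w) := by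
  induction N with
  | zero => exact LipschitzWith.id
  | succ N ih => simpa [wordMap, pow_succ'] using (hf (w 0)).comp (ih (Fin.tail w))

theorem dimH_iInter_iterate_hutchinson_le [EMetricSpace X] {r : ℝ≥0} (hr0 : 0 < r) (hr1 : r < 1)
    (hf : ∀ i, LipschitzWith r (f i)) {B : Set X} (hB : Metric.ediam B ≠ ∞) :
    dimH (⋂ N, (hutchinson f)^[N] B) ≤ ENNReal.ofReal (log m / log (1 / r)) :=
  dimH_le_of_forall_subset_iUnion_geometric hr0 hr1 hB (fun N w => wordMap f N w '' B)
    (fun N w => (lipschitzWith_wordMap f hf N w).ediam_image_le B)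
    (fun N => (Set.iInter_subset _ N).trans (iterate_hutchinson_subset_iUnion_wordMap f B N))

variable [MeasurableSpace X] {μ : Measure X} {p : Fin m → ℝ≥0∞}

theorem measure_le_measure_hutchinson (hp : ∑ i, p i = 1) (hf : ∀ i, Measurable (f i))
    (hμ : μ = ∑ i, p i • μ.map (f i)) {K : Set X} (hK : MeasurableSet (hutchinson f K)) :
    μ K ≤ μ (hutchinson f K) :=
  calc μ K = ∑ i, p i * μ K := by rw [← Finset.sum_mul, hp, one_mul]
    _ ≤ ∑ i, p i * μ (f i ⁻¹' hutchinson f K) := by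
        gcongr with i
        exact fun x hx => Set.mem_iUnion_of_mem i (Set.mem_image_of_mem _ hx)
    _ = μ (hutchinson f K) := by
        conv_rhs => rw [hμ]
        simp [Measure.map_apply (hf _) hK]

theorem measure_le_measure_iInter_iterate_hutchinson [IsFiniteMeasure μ] (hp : ∑ i, p i = 1)
    (hf : ∀ i, Measurable (f i)) (hμ : μ = ∑ i, p i • μ.map (f i)) {B : Set X}
    (hB : hutchinson f B ⊆ B) (hmeas : ∀ N, MeasurableSet ((hutchinson f)^[N] B)) :
    μ B ≤ μ (⋂ N, (hutchinson f)^[N] B) := by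
  have hle N : μ B ≤ μ ((hutchinson f)^[N] B) := by
    induction N with
    | zero => exact le_rfl
    | succ N ih =>
      rw [Function.iterate_succ_apply']
      refine ih.trans (measure_le_measure_hutchinson f hp hf hμ ?_)
      simpa only [Function.iterate_succ_apply'] using hmeas (N + 1)
  exact ge_of_tendsto (tendsto_measure_iInter_atTop (fun N => (hmeas N).nullMeasurableSet)
    ((monotone_hutchinson f).antitone_iterate_of_map_le hB) ⟨0, measure_ne_top μ _⟩)
    (.of_forall hle)

end hutchinson

theorem upperHausdorffDim_le_of_forall_closedBall {X : Type*} [MetricSpace X] [MeasurableSpace X]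
    {μ : Measure X} [IsProbabilityMeasure μ] (x₀ : X) (T₀ : ℝ) {s : ℝ≥0∞}
    (h : ∀ T ≥ T₀, ∃ A, MeasurableSet A ∧ dimH A ≤ s ∧ μ (Metric.closedBall x₀ T) ≤ μ A) :
    upperHausdorffDim μ ≤ s := by
  choose! A hAm hAdim hAμ using h
  have hball (j : ℕ) : μ (Metric.closedBall x₀ j) ≤ μ (⋃ j : ℕ, A (max T₀ j)) :=
    (measure_mono (Metric.closedBall_subset_closedBall (le_max_right _ _))).trans
      ((hAμ _ (le_max_left _ _)).trans (measure_mono (Set.subset_iUnion_of_subset j subset_rfl)))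
  have hfull : μ (⋃ j : ℕ, A (max T₀ j)) = 1 := by
    refine le_antisymm prob_le_one ?_
    have hmono : Monotone fun j : ℕ => Metric.closedBall x₀ j :=
      fun i j hij => Metric.closedBall_subset_closedBall (by exact_mod_cast hij)
    have hlim := tendsto_measure_iUnion_atTop (μ := μ) hmono
    rw [Metric.iUnion_closedBall_nat, measure_univ] at hlim
    exact le_of_tendsto' hlim hball
  calc upperHausdorffDim μ ≤ dimH (⋃ j : ℕ, A (max T₀ j)) :=
        iInf₂_le_of_le _ (MeasurableSet.iUnion fun j => hAm _ (le_max_left _ _)) (iInf_le _ hfull)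
    _ ≤ s := by
        rw [dimH_iUnion]
        exact iSup_le fun j => hAdim _ (le_max_left _ _)

theorem upperHausdorffDim_le_of_isInvariant {X : Type*} [MetricSpace X] [ProperSpace X]
    [MeasurableSpace X] [BorelSpace X] {m : ℕ} (f : Fin m → X → X) {r : ℝ≥0} (hr0 : 0 < r)
    (hr1 : r < 1) (hf : ∀ i, LipschitzWith r (f i)) {p : Fin m → ℝ≥0∞} (hp : ∑ i, p i = 1)
    (μ : Measure X) [IsProbabilityMeasure μ] (hμ : μ = ∑ i, p i • μ.map (f i)) :
    upperHausdorffDim μ ≤ ENNReal.ofReal (log m / log (1 / r)) := by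
  obtain ⟨x₀⟩ := nonempty_of_isProbabilityMeasure μ
  have hr : (0 : ℝ) < 1 - r := sub_pos.2 (by exact_mod_cast hr1)
  refine upperHausdorffDim_le_of_forall_closedBall x₀ ((∑ i, dist (f i x₀) x₀) / (1 - r))
    fun T hT => ?_
  have hdist i : dist (f i x₀) x₀ ≤ (1 - r) * T :=
    (Finset.single_le_sum (f := fun j => dist (f j x₀) x₀) (fun j _ => dist_nonneg)
      (Finset.mem_univ i)).trans
      (by rwa [ge_iff_le, div_le_iff₀ hr, mul_comm] at hT)
  have hB : hutchinson f (Metric.closedBall x₀ T) ⊆ Metric.closedBall x₀ T :=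
    Set.iUnion_subset fun i => ((hf i).mapsTo_closedBall x₀ T).image_subset.trans
      (Metric.closedBall_subset_closedBall' (by linarith [hdist i]))
  have hcpt := isCompact_iterate_hutchinson f (fun i => (hf i).continuous)
    (isCompact_closedBall x₀ T)
  exact ⟨_, .iInter fun N => (hcpt N).measurableSet,
    dimH_iInter_iterate_hutchinson_le f hr0 hr1 hf Metric.isBounded_closedBall.ediam_ne_top,
    measure_le_measure_iInter_iterate_hutchinson f hp (fun i => (hf i).continuous.measurable) hμ hB
      fun N => (hcpt N).measurableSet⟩

theorem dist_precondStep_logistic_le {n κ : Type*} [Fintype n] [DecidableEq n]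
    {H : Matrix n n ℝ} {cm cM lam η R : ℝ} (hH : H.IsHermitian) (hcm : 0 < cm) (hcmM : cm ≤ cM)
    (hHlow : (H - cm • 1).PosSemidef) (hHhigh : (cM • 1 - H).PosSemidef) (hη : 0 ≤ η)
    (hlam : 0 ≤ lam) (hηlam : η * lam ≤ cm) {a : κ → EuclideanSpace ℝ n} {y : κ → ℝ}
    {S : Finset κ} (hS : S.Nonempty) (ha : ∀ j ∈ S, ‖a j‖ ≤ R) (hy : ∀ j ∈ S, |y j| = 1)
    (w w' : EuclideanSpace ℝ n) :
    dist (precondStep (Matrix.toEuclideanLin H⁻¹) η S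
        (fun j w => logisticDataGrad (a j) (y j) w + lam • w) w)
      (precondStep (Matrix.toEuclideanLin H⁻¹) η S
        (fun j w => logisticDataGrad (a j) (y j) w + lam • w) w') ≤
      (1 - η * cM⁻¹ * lam + 1 / 4 * η * cm⁻¹ * R ^ 2) * dist w w' := by
  rw [dist_eq_norm, dist_eq_norm]
  refine (norm_precondStep_sub_le _ hS hη (inv_nonneg.2 hcm.le)
    (hH.norm_sub_smul_toEuclideanLin_inv_le hcm hcmM hHlow hHhigh (by positivity) hηlam)
    (hH.norm_toEuclideanLin_inv_le hcm hHlow) _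
    (fun j hj => norm_logisticDataGrad_sub_le (ha j hj) (hy j hj)) w w').trans_eq ?_
  ring

theorem precond_logistic_rate_mem_Ioo {lam R η cm cM : ℝ} (hlam : 0 < lam) (hcm : 0 < cm)
    (hcmM : cm ≤ cM) (hR0 : 0 ≤ R) (hRlam : R < 2 * √(cm * lam / cM)) (hη : 0 < η)
    (hη' : η < cm / lam) :
    1 - η * cM⁻¹ * lam + 1 / 4 * η * cm⁻¹ * R ^ 2 ∈ Set.Ioo 0 1 := by
  have hcM : 0 < cM := hcm.trans_le hcmM
  have hηlam : η * lam < cm := (lt_div_iff₀ hlam).1 hη'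
  have hreg : η * cM⁻¹ * lam < 1 := by
    rw [mul_right_comm, ← div_eq_mul_inv, div_lt_one hcM]
    exact hηlam.trans_le hcmM
  have hR2 : R ^ 2 < 4 * (cm * lam / cM) := by
    calc R ^ 2 < (2 * √(cm * lam / cM)) ^ 2 := pow_lt_pow_left₀ hRlam hR0 two_ne_zero
      _ = 4 * (cm * lam / cM) := by rw [mul_pow, sq_sqrt (by positivity)]; norm_num
  have hdata : 1 / 4 * η * cm⁻¹ * R ^ 2 < η * cM⁻¹ * lam := by
    calc 1 / 4 * η * cm⁻¹ * R ^ 2 < 1 / 4 * η * cm⁻¹ * (4 * (cm * lam / cM)) := by gcongr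
      _ = η * cM⁻¹ * lam := by field_simp
  constructor <;> nlinarith [show 0 ≤ 1 / 4 * η * cm⁻¹ * R ^ 2 by positivity]

theorem precond_sgd_logistic_hausdorff_dim_bound_general
    (d n b m : ℕ) (hb : 0 < b) (hnm : n = m * b)
    (a : Fin n → EuclideanSpace ℝ (Fin d)) (y : Fin n → ℝ)
    (hy : ∀ i, y i = 1 ∨ y i = -1)
    (lam R η : ℝ) (hlam : 0 < lam)
    (H : Matrix (Fin d) (Fin d) ℝ) (cm cM : ℝ) (hcm : 0 < cm) (hcmM : cm ≤ cM)
    (hHpd : H.PosDef)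
    (hHlow : (H - cm • (1 : Matrix (Fin d) (Fin d) ℝ)).PosSemidef)
    (hHhigh : ((cM • (1 : Matrix (Fin d) (Fin d) ℝ)) - H).PosSemidef)
    (hR : ∀ i, ‖a i‖ ≤ R) (hR0 : 0 ≤ R) (hRlam : R < 2 * Real.sqrt (cm * lam / cM))
    (hη : 0 < η) (hη' : η < cm / lam)
    (ℓ : EuclideanSpace ℝ (Fin d) → EuclideanSpace ℝ (Fin d) × ℝ → ℝ)
    (hℓ : ∀ w z, ℓ w z = Real.log (1 + Real.exp (-z.2 * ⟪z.1, w⟫)) + lam * ‖w‖ ^ 2 / 2)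
    (S : Fin m → Finset (Fin n))
    (hcard : ∀ i, (S i).card = b)
    (p : Fin m → ℝ≥0∞) (hpsum : ∑ i, p i = 1)
    (h : Fin m → EuclideanSpace ℝ (Fin d) → EuclideanSpace ℝ (Fin d))
    (hdef : ∀ i w, h i w = w - (η / b) •
      Matrix.toEuclideanLin H⁻¹ (∑ j ∈ S i, gradient (fun w' => ℓ w' (a j, y j)) w))
    (μ : Measure (EuclideanSpace ℝ (Fin d))) [IsProbabilityMeasure μ]
    (hinv : μ = ∑ i, p i • μ.map (h i)) :
    upperHausdorffDim μ ≤
      ENNReal.ofReal (Real.log ((n : ℝ) / (b : ℝ)) /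
        Real.log (1 / (1 - η * cM⁻¹ * lam + (1 / 4) * η * cm⁻¹ * R ^ 2))) := by
  obtain ⟨hr0, hr1⟩ := precond_logistic_rate_mem_Ioo hlam hcm hcmM hR0 hRlam hη hη'
  have hstep i : h i = precondStep (Matrix.toEuclideanLin H⁻¹) η (S i)
      fun j w => logisticDataGrad (a j) (y j) w + lam • w := by
    funext w
    rw [hdef, precondStep, hcard i]
    congr 3
    refine Finset.sum_congr rfl fun j _ => ?_
    have hℓj : (fun w' => ℓ w' (a j, y j)) = logisticLoss lam (a j) (y j) :=
      funext fun w' => hℓ w' (a j, y j)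
    rw [hℓj, (hasGradientAt_logisticLoss lam (a j) (y j) w).gradient]
  have hlip i : LipschitzWith ⟨_, hr0.le⟩ (h i) := .of_dist_le_mul fun w w' => by
    rw [hstep i]
    exact dist_precondStep_logistic_le hHpd.isHermitian hcm hcmM hHlow hHhigh hη.le hlam.le
      ((lt_div_iff₀ hlam).1 hη').le (Finset.card_pos.1 (hcard i ▸ hb)) (fun j _ => hR j)
      (fun j _ => by rcases hy j with hyj | hyj <;> simp [hyj]) w w'
  have hnb : (n : ℝ) / b = m := by
    rw [hnm, Nat.cast_mul, mul_div_cancel_right₀ _ (by positivity)]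
  rw [hnb]
  exact upperHausdorffDim_le_of_isInvariant h hr0 hr1 hlip hpsum μ hinv

/-- Regularized logistic regression, preconditioned SGD:
with `R < 2√(mλ/M)`, preconditioner `mI ⪯ H ⪯ MI` and step-size `0 < η < m/λ`,
any invariant measure `μ` of the preconditioned SGD iterated function system
with batch size `b` satisfies
`dim̄_H μ ≤ log(n/b) / log(1/(1 − η M⁻¹ λ + (1/4) η m⁻¹ R²))`. -/
theorem precond_sgd_logistic_hausdorff_dim_bound
    (d n b m : ℕ) (hb : 0 < b) (hnm : n = m * b)
    (a : Fin n → EuclideanSpace ℝ (Fin d)) (y : Fin n → ℝ)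
    (hy : ∀ i, y i = 1 ∨ y i = -1)
    (lam R η : ℝ) (hlam : 0 < lam)
    (H : Matrix (Fin d) (Fin d) ℝ) (cm cM : ℝ) (hcm : 0 < cm) (hcmM : cm ≤ cM)
    (hHpd : H.PosDef)
    (hHlow : (H - cm • (1 : Matrix (Fin d) (Fin d) ℝ)).PosSemidef)
    (hHhigh : ((cM • (1 : Matrix (Fin d) (Fin d) ℝ)) - H).PosSemidef)
    (hR : ∀ i, ‖a i‖ ≤ R) (hR0 : 0 ≤ R) (hRlam : R < 2 * Real.sqrt (cm * lam / cM))
    (hη : 0 < η) (hη' : η < cm / lam)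
    (ℓ : EuclideanSpace ℝ (Fin d) → EuclideanSpace ℝ (Fin d) × ℝ → ℝ)
    (hℓ : ∀ w z, ℓ w z = Real.log (1 + Real.exp (-z.2 * ⟪z.1, w⟫)) + lam * ‖w‖ ^ 2 / 2)
    (S : Fin m → Finset (Fin n))
    (hcard : ∀ i, (S i).card = b)
    (hdisj : ∀ i j, i ≠ j → Disjoint (S i) (S j))
    (hcover : ∀ j : Fin n, ∃ i, j ∈ S i)
    (p : Fin m → ℝ≥0∞) (hp : ∀ i, 0 < p i) (hpsum : ∑ i, p i = 1)
    (h : Fin m → EuclideanSpace ℝ (Fin d) → EuclideanSpace ℝ (Fin d))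
    (hdef : ∀ i w, h i w = w - (η / b) •
      Matrix.toEuclideanLin H⁻¹ (∑ j ∈ S i, gradient (fun w' => ℓ w' (a j, y j)) w))
    (μ : Measure (EuclideanSpace ℝ (Fin d))) [IsProbabilityMeasure μ]
    (hinv : μ = ∑ i, p i • μ.map (h i)) :
    upperHausdorffDim μ ≤
      ENNReal.ofReal (Real.log ((n : ℝ) / (b : ℝ)) /
        Real.log (1 / (1 - η * cM⁻¹ * lam + (1 / 4) * η * cm⁻¹ * R ^ 2))) :=
  precond_sgd_logistic_hausdorff_dim_bound_general d n b m hb hnm a y hy lam R η hlam H cm cM hcm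
    hcmM hHpd hHlow hHhigh hR hR0 hRlam hη hη' ℓ hℓ S hcard p hpsum h hdef μ hinv
end

section
/- Consider the non-convex robust regression loss ℓ(w,(a,y)) = ρ_exp(y − ⟨w,a⟩) + λ_r‖w‖²/2 with ρ_exp(t) = 1 − e^{−t²/t₀}, t₀ > 0, λ_r > 0, data z_i = (a_i,y_i), R := max_i ‖a_i‖ satisfying R < √(λ_r t₀ m / (2M)), and preconditioned SGD with a fixed symmetric positive definite matrix H satisfying mI ⪯ H ⪯ MI for some 0 < m ≤ M. Assume the step-size satisfies 0 < η < m/(λ_r + 2R²/t₀). Let μ be any Borel probability measure on ℝ^d invariant under the preconditioned SGD iterated function system with batch size b (so m_b = n/b batches). Then dim̄_H μ ≤ log(n/b) / log(1/(1 − η M^{−1} λ_r + η m^{−1} R² (2/t₀))). -/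
/-!
Every SGD map is a contraction. The quadratic form of `H⁻¹` lies between `M⁻¹‖x‖²` and
`m⁻¹‖x‖²`, so the ridge part `w ↦ w - ηλ H⁻¹ w` contracts by `1 - ηλ/M`, while the data part is
`η R² (2/t₀)/m`-Lipschitz because `ρ_exp'` is `(2/t₀)`-Lipschitz; the bound on `R` makes the
total rate `q` smaller than `1`.

For `m_b` maps that are `q`-Lipschitz with `q < 1`, every large ball `B` is mapped into itself.
The compact sets `B ⊇ ⋃ᵢ hᵢ(B) ⊇ ⋃ᵢⱼ hᵢ(hⱼ(B)) ⊇ ⋯` all have measure at least `μ B` by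
invariance, and the `k`-th one is covered by `m_b ^ k` sets of diameter at most `q ^ k diam B`, so
their intersection has Hausdorff dimension at most `log m_b / log (1/q)`. Letting the radius of
`B` grow gives countably many such sets whose union has full measure.
-/

open MeasureTheory Filter
open scoped ENNReal RealInnerProductSpace

open Topology
open scoped NNReal

section Operators
variable {E : Type*} [NormedAddCommGroup E] [InnerProductSpace ℝ E]

theorem LinearMap.IsSymmetric.norm_apply_le_of_abs_inner_le [FiniteDimensional ℝ E]
    {T : E →ₗ[ℝ] E} (hT : T.IsSymmetric) {c : ℝ}
    (h : ∀ x, |⟪T x, x⟫| ≤ c * ‖x‖ ^ 2) (x : E) : ‖T x‖ ≤ c * ‖x‖ := by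
  by_cases hc : 0 ≤ c
  · let T' := LinearMap.toContinuousLinearMap T
    have hnorm : ‖T'‖ ≤ c := by
      rw [T'.norm_eq_iSup_rayleighQuotient hT]
      refine ciSup_le fun x => ?_
      rcases eq_or_ne x 0 with rfl | hx
      · simpa using hc
      · rw [ContinuousLinearMap.rayleighQuotient, abs_div, abs_sq,
          div_le_iff₀ (by positivity)]
        exact h x
    exact T'.le_of_opNorm_le hnorm x
  · rcases eq_or_ne x 0 with rfl | hx
    · simp
    have : c * ‖x‖ ^ 2 < 0 := mul_neg_of_neg_of_pos (not_le.1 hc) (by positivity)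
    linarith [h x, abs_nonneg ⟪T x, x⟫]

theorem LinearMap.IsPositive.norm_apply_le [FiniteDimensional ℝ E] {T : E →ₗ[ℝ] E}
    (hT : T.IsPositive) {c : ℝ} (h : ∀ x, ⟪T x, x⟫ ≤ c * ‖x‖ ^ 2) (x : E) :
    ‖T x‖ ≤ c * ‖x‖ :=
  hT.isSymmetric.norm_apply_le_of_abs_inner_le
    (fun y => (abs_of_nonneg (hT.inner_nonneg_left y)).trans_le (h y)) x

theorem LinearMap.IsSymmetric.norm_sub_smul_apply_le [FiniteDimensional ℝ E]
    {T : E →ₗ[ℝ] E} (hT : T.IsSymmetric) {α β c : ℝ}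
    (hα : ∀ x, α * ‖x‖ ^ 2 ≤ ⟪T x, x⟫) (hβ : ∀ x, ⟪T x, x⟫ ≤ β * ‖x‖ ^ 2)
    (hc : 0 ≤ c) (hcβ : c * β ≤ 1) (x : E) :
    ‖x - c • T x‖ ≤ (1 - c * α) * ‖x‖ := by
  have hP : (LinearMap.id - c • T).IsSymmetric :=
    LinearMap.IsSymmetric.id.sub (hT.smul (conj_trivial c))
  refine hP.norm_apply_le_of_abs_inner_le (fun y => ?_) x
  have hy : ⟪(LinearMap.id - c • T : E →ₗ[ℝ] E) y, y⟫ = ‖y‖ ^ 2 - c * ⟪T y, y⟫ := by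
    simp [inner_sub_left, real_inner_smul_left]
  rw [hy, abs_le]
  constructor <;> nlinarith [mul_le_mul_of_nonneg_left (hα y) hc,
    mul_le_mul_of_nonneg_left (hβ y) hc, sq_nonneg ‖y‖]

theorem inner_apply_le_of_rightInverse {A B : E →ₗ[ℝ] E} (hAB : Function.RightInverse B A)
    {a : ℝ} (ha : 0 < a) (hA : ∀ x, a * ‖x‖ ^ 2 ≤ ⟪A x, x⟫) (x : E) :
    ⟪B x, x⟫ ≤ a⁻¹ * ‖x‖ ^ 2 := by
  have hx : ⟪B x, x⟫ = ⟪A (B x), B x⟫ := by rw [hAB x, real_inner_comm]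
  have hBx : a * ‖B x‖ ≤ ‖x‖ := by
    rcases eq_or_ne (B x) 0 with h0 | h0
    · simp [h0]
    have : a * ‖B x‖ ^ 2 ≤ ‖B x‖ * ‖x‖ :=
      (hA (B x)).trans (hx ▸ real_inner_le_norm _ _)
    nlinarith [norm_pos_iff.2 h0]
  calc ⟪B x, x⟫ ≤ ‖B x‖ * ‖x‖ := real_inner_le_norm _ _
    _ ≤ a⁻¹ * ‖x‖ * ‖x‖ := by gcongr; rwa [le_inv_mul_iff₀ ha]
    _ = a⁻¹ * ‖x‖ ^ 2 := by ring

theorem le_inner_apply_of_rightInverse {A B : E →ₗ[ℝ] E} (hA : A.IsPositive)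
    (hAB : Function.RightInverse B A) {b : ℝ} (hb : 0 < b)
    (hAb : ∀ x, ⟪A x, x⟫ ≤ b * ‖x‖ ^ 2) (x : E) :
    b⁻¹ * ‖x‖ ^ 2 ≤ ⟪B x, x⟫ := by
  -- positivity of `A` at `B x - b⁻¹ • x` is Cauchy–Schwarz for the form `⟪A ·, ·⟫`
  have key := hA.inner_nonneg_left (B x - b⁻¹ • x)
  have hsymm : ⟪A x, B x⟫ = ‖x‖ ^ 2 := by
    rw [hA.isSymmetric, hAB x, real_inner_self_eq_norm_sq]
  simp only [map_sub, map_smul, hAB x, inner_sub_left, inner_sub_right, real_inner_smul_left,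
    real_inner_smul_right, hsymm, real_inner_self_eq_norm_sq, real_inner_comm (B x) x] at key
  have hAx : b⁻¹ * (b⁻¹ * ⟪A x, x⟫) ≤ b⁻¹ * ‖x‖ ^ 2 :=
    calc b⁻¹ * (b⁻¹ * ⟪A x, x⟫) ≤ b⁻¹ * (b⁻¹ * (b * ‖x‖ ^ 2)) := by gcongr; exact hAb x
      _ = b⁻¹ * ‖x‖ ^ 2 := by field_simp
  linarith

end Operators

namespace Matrix
variable {n : Type*} [Fintype n] [DecidableEq n] {H : Matrix n n ℝ}

theorem inner_toEuclideanLin_le_of_posSemidef_sub {A B : Matrix n n ℝ} (h : (B - A).PosSemidef)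
    (x : EuclideanSpace ℝ n) : ⟪toEuclideanLin A x, x⟫ ≤ ⟪toEuclideanLin B x, x⟫ := by
  simpa [inner_sub_left] using (isPositive_toEuclideanLin_iff.2 h).inner_nonneg_left x

theorem inner_toEuclideanLin_smul_one (c : ℝ) (x : EuclideanSpace ℝ n) :
    ⟪toEuclideanLin (c • 1 : Matrix n n ℝ) x, x⟫ = c * ‖x‖ ^ 2 := by
  simp [real_inner_smul_left]

theorem PosDef.rightInverse_toEuclideanLin_inv (hH : H.PosDef) :
    Function.RightInverse (toEuclideanLin H⁻¹) (toEuclideanLin H) := fun x => by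
  rw [← LinearMap.comp_apply, ← toLpLin_mul_same,
    mul_nonsing_inv H ((isUnit_iff_isUnit_det H).1 hH.isUnit)]
  simp

theorem PosDef.inner_toEuclideanLin_inv_le (hH : H.PosDef) {a : ℝ} (ha : 0 < a)
    (hHa : (H - a • 1).PosSemidef) (x : EuclideanSpace ℝ n) :
    ⟪toEuclideanLin H⁻¹ x, x⟫ ≤ a⁻¹ * ‖x‖ ^ 2 :=
  inner_apply_le_of_rightInverse hH.rightInverse_toEuclideanLin_inv ha
    (fun y => inner_toEuclideanLin_smul_one a y ▸ inner_toEuclideanLin_le_of_posSemidef_sub hHa y) x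

theorem PosDef.le_inner_toEuclideanLin_inv (hH : H.PosDef) {b : ℝ} (hb : 0 < b)
    (hHb : (b • 1 - H).PosSemidef) (x : EuclideanSpace ℝ n) :
    b⁻¹ * ‖x‖ ^ 2 ≤ ⟪toEuclideanLin H⁻¹ x, x⟫ :=
  le_inner_apply_of_rightInverse (isPositive_toEuclideanLin_iff.2 hH.posSemidef)
    hH.rightInverse_toEuclideanLin_inv hb
    (fun y => inner_toEuclideanLin_smul_one b y ▸ inner_toEuclideanLin_le_of_posSemidef_sub hHb y) x

end Matrix

noncomputable def rhoExp (t₀ t : ℝ) : ℝ := 1 - Real.exp (-t ^ 2 / t₀)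

noncomputable def rhoExpDeriv (t₀ t : ℝ) : ℝ := 2 * t / t₀ * Real.exp (-t ^ 2 / t₀)

theorem hasDerivAt_rhoExp (t₀ t : ℝ) : HasDerivAt (rhoExp t₀) (rhoExpDeriv t₀ t) t := by
  refine ((((hasDerivAt_pow 2 t).fun_neg.div_const t₀).exp).const_sub 1).congr_deriv ?_
  rw [rhoExpDeriv]
  ring

theorem abs_one_sub_two_mul_le_exp {x : ℝ} (hx : 0 ≤ x) : |1 - 2 * x| ≤ Real.exp x := by
  have := Real.quadratic_le_exp_of_nonneg hx
  rw [abs_le]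
  constructor <;> nlinarith [Real.one_le_exp hx, sq_nonneg (x - 2)]

theorem abs_rhoExpDeriv_sub_le {t₀ : ℝ} (ht₀ : 0 < t₀) (u v : ℝ) :
    |rhoExpDeriv t₀ u - rhoExpDeriv t₀ v| ≤ 2 / t₀ * |u - v| := by
  set ψ' : ℝ → ℝ := fun s => 2 / t₀ * Real.exp (-(s ^ 2 / t₀)) * (1 - 2 * (s ^ 2 / t₀))
  have hderiv (s : ℝ) : HasDerivAt (rhoExpDeriv t₀) (ψ' s) s := by
    refine ((((hasDerivAt_id s).const_mul 2).div_const t₀).mul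
      ((hasDerivAt_pow 2 s).fun_neg.div_const t₀).exp).congr_deriv ?_
    simp only [ψ', id, neg_div]
    ring
  have hbound (s : ℝ) : ‖ψ' s‖ ≤ 2 / t₀ := by
    have hs : 0 ≤ s ^ 2 / t₀ := by positivity
    have hexp : Real.exp (-(s ^ 2 / t₀)) * Real.exp (s ^ 2 / t₀) = 1 := by
      rw [← Real.exp_add, neg_add_cancel, Real.exp_zero]
    rw [Real.norm_eq_abs, abs_mul, abs_mul, Real.abs_exp, abs_of_pos (by positivity : 0 < 2 / t₀)]
    calc 2 / t₀ * Real.exp (-(s ^ 2 / t₀)) * |1 - 2 * (s ^ 2 / t₀)|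
        ≤ 2 / t₀ * Real.exp (-(s ^ 2 / t₀)) * Real.exp (s ^ 2 / t₀) := by
          gcongr; exact abs_one_sub_two_mul_le_exp hs
      _ = 2 / t₀ := by rw [mul_assoc, hexp, mul_one]
  simpa [Real.norm_eq_abs] using convex_univ.norm_image_sub_le_of_norm_hasDerivWithin_le
    (fun s _ => (hderiv s).hasDerivWithinAt) (fun s _ => hbound s) (Set.mem_univ v)
    (Set.mem_univ u)

section SgdStep
open Finset
variable {E : Type*} [NormedAddCommGroup E] [InnerProductSpace ℝ E]

theorem hasGradientAt_residualLoss [CompleteSpace E] {φ φ' : ℝ → ℝ}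
    (hφ : ∀ t, HasDerivAt φ (φ' t) t) (a : E) (y lam : ℝ) (w : E) :
    HasGradientAt (fun w => φ (y - ⟪w, a⟫) + lam * ‖w‖ ^ 2 / 2)
      (-φ' (y - ⟪w, a⟫) • a + lam • w) w := by
  have hres : HasFDerivAt (fun w : E => y - ⟪w, a⟫) (-innerSL ℝ a) w := by
    simp_rw [real_inner_comm a]
    exact ((innerSL ℝ a).hasFDerivAt).const_sub y
  have hf : (fun w => φ (y - ⟪w, a⟫) + lam * ‖w‖ ^ 2 / 2) =
      (φ ∘ fun w => y - ⟪w, a⟫) + (lam / 2) • fun w : E => ‖w‖ ^ 2 := by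
    funext v
    simp only [Pi.add_apply, Function.comp_apply, Pi.smul_apply, smul_eq_mul]
    ring
  rw [hasGradientAt_iff_hasFDerivAt, hf]
  refine (((hφ _).comp_hasFDerivAt w hres).add
    ((hasStrictFDerivAt_norm_sq w).hasFDerivAt.const_smul (lam / 2))).congr_fderiv ?_
  ext v
  simp [real_inner_comm]
  ring

theorem gradient_robustLoss [CompleteSpace E] (t₀ lam : ℝ) (a : E) (y : ℝ) (w : E) :
    gradient (fun w => rhoExp t₀ (y - ⟪w, a⟫) + lam * ‖w‖ ^ 2 / 2) w =
      -rhoExpDeriv t₀ (y - ⟪w, a⟫) • a + lam • w :=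
  (hasGradientAt_residualLoss (hasDerivAt_rhoExp t₀) a y lam w).gradient

/-- The preconditioned SGD step on the batch `S` for the losses `φ (y j - ⟪w, a j⟫) + lam ‖w‖²/2`,
written with `ψ = φ'` (see `hasGradientAt_residualLoss`). -/
noncomputable def residualSgdStep {ι : Type*} (T : E →ₗ[ℝ] E) (ψ : ℝ → ℝ) (lam η : ℝ)
    (S : Finset ι) (a : ι → E) (y : ι → ℝ) (w : E) : E :=
  w - (η / #S) • T (∑ j ∈ S, (-ψ (y j - ⟪w, a j⟫) • a j + lam • w))

theorem residualSgdStep_eq {ι : Type*} (T : E →ₗ[ℝ] E) (ψ : ℝ → ℝ) (lam η : ℝ)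
    {S : Finset ι} (hS : S.Nonempty) (a : ι → E) (y : ι → ℝ) (w : E) :
    residualSgdStep T ψ lam η S a y w =
      (w - (η * lam) • T w) + (η / #S) • ∑ j ∈ S, ψ (y j - ⟪w, a j⟫) • T (a j) := by
  have hS' : (#S : ℝ) ≠ 0 := by exact_mod_cast hS.card_pos.ne'
  simp only [residualSgdStep, sum_add_distrib, sum_const, neg_smul, sum_neg_distrib, map_add,
    map_neg, map_sum, map_smul, smul_add, smul_neg, ← Nat.cast_smul_eq_nsmul ℝ, smul_smul]
  rw [show η / #S * (#S * lam) = η * lam by field_simp]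
  abel

theorem norm_residualSgdStep_sub_le [FiniteDimensional ℝ E] {ι : Type*} {T : E →ₗ[ℝ] E}
    (hT : T.IsPositive) {α β : ℝ} (hα : ∀ x, α * ‖x‖ ^ 2 ≤ ⟪T x, x⟫)
    (hβ : ∀ x, ⟪T x, x⟫ ≤ β * ‖x‖ ^ 2) (hβ₀ : 0 ≤ β) {ψ : ℝ → ℝ} {L : ℝ}
    (hψ : ∀ u v, |ψ u - ψ v| ≤ L * |u - v|) {S : Finset ι} (hS : S.Nonempty) {a : ι → E}
    (y : ι → ℝ) {R : ℝ} (hR : ∀ j ∈ S, ‖a j‖ ≤ R) {lam η : ℝ} (hlam : 0 ≤ lam) (hη : 0 ≤ η)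
    (hηβ : η * lam * β ≤ 1) (w₁ w₂ : E) :
    ‖residualSgdStep T ψ lam η S a y w₁ - residualSgdStep T ψ lam η S a y w₂‖ ≤
      (1 - η * lam * α + η * β * L * R ^ 2) * ‖w₁ - w₂‖ := by
  set v := w₁ - w₂
  have hS' : (0 : ℝ) < #S := by exact_mod_cast hS.card_pos
  have hL : 0 ≤ L := by simpa using (abs_nonneg _).trans (hψ 1 0)
  have hlin : ‖v - (η * lam) • T v‖ ≤ (1 - η * lam * α) * ‖v‖ :=
    hT.isSymmetric.norm_sub_smul_apply_le hα hβ (by positivity) (by linarith) v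
  have hterm : ∀ j ∈ S, ‖(ψ (y j - ⟪w₁, a j⟫) - ψ (y j - ⟪w₂, a j⟫)) • T (a j)‖ ≤
      L * ‖v‖ * R * (β * R) := by
    intro j hj
    have hψj : |ψ (y j - ⟪w₁, a j⟫) - ψ (y j - ⟪w₂, a j⟫)| ≤ L * ‖v‖ * R :=
      calc _ ≤ L * |⟪v, a j⟫| := by
            simpa [v, inner_sub_left, abs_sub_comm] using hψ (y j - ⟪w₁, a j⟫) (y j - ⟪w₂, a j⟫)
        _ ≤ L * (‖v‖ * R) := by
            gcongr; exact (abs_real_inner_le_norm _ _).trans (by gcongr; exact hR j hj)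
        _ = L * ‖v‖ * R := by ring
    have hTa : ‖T (a j)‖ ≤ β * R := (hT.norm_apply_le hβ (a j)).trans (by gcongr; exact hR j hj)
    have hR₀ : 0 ≤ R := (norm_nonneg _).trans (hR j hj)
    rw [norm_smul, Real.norm_eq_abs]
    exact mul_le_mul hψj hTa (norm_nonneg _) (by positivity)
  have hdiff : residualSgdStep T ψ lam η S a y w₁ - residualSgdStep T ψ lam η S a y w₂ =
      (v - (η * lam) • T v) + (η / #S) •
        ∑ j ∈ S, (ψ (y j - ⟪w₁, a j⟫) - ψ (y j - ⟪w₂, a j⟫)) • T (a j) := by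
    simp only [residualSgdStep_eq T ψ lam η hS, v, map_sub, sub_smul, sum_sub_distrib, smul_sub]
    abel
  calc _ ≤ ‖v - (η * lam) • T v‖ + η / #S * ∑ j ∈ S, L * ‖v‖ * R * (β * R) := by
        rw [hdiff]
        refine (norm_add_le _ _).trans (add_le_add le_rfl ?_)
        rw [norm_smul, Real.norm_of_nonneg (by positivity)]
        gcongr
        exact (norm_sum_le _ _).trans (sum_le_sum hterm)
    _ ≤ (1 - η * lam * α) * ‖v‖ + η / #S * (#S * (L * ‖v‖ * R * (β * R))) := by
        rw [sum_const, nsmul_eq_mul]; linarith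
    _ = (1 - η * lam * α + η * β * L * R ^ 2) * ‖v‖ := by field_simp

end SgdStep

theorem preconditioned_rate_mem_Ioo {lamr t₀ R η cm cM : ℝ} (ht₀ : 0 < t₀) (hcm : 0 < cm)
    (hcmM : cm ≤ cM) (hR0 : 0 ≤ R) (hRbound : R < √(lamr * t₀ * cm / (2 * cM)))
    (hη : 0 < η) (hηlam : η * lamr < cm) :
    1 - η * cM⁻¹ * lamr + η * cm⁻¹ * R ^ 2 * (2 / t₀) ∈ Set.Ioo 0 1 := by
  have hcM : 0 < cM := hcm.trans_le hcmM
  have hR2 : R ^ 2 * (2 * cM) < lamr * t₀ * cm :=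
    (lt_div_iff₀ (by positivity)).1 ((Real.lt_sqrt hR0).1 hRbound)
  have hlam : η * cM⁻¹ * lamr < 1 := by
    rw [mul_right_comm, ← div_eq_mul_inv, div_lt_one hcM]; linarith
  have hRlam : η * cm⁻¹ * R ^ 2 * (2 / t₀) < η * cM⁻¹ * lamr := by
    have : cm⁻¹ * R ^ 2 * (2 / t₀) < cM⁻¹ * lamr := by
      rw [← sub_pos]
      field_simp
      linarith
    simpa only [mul_assoc] using mul_lt_mul_of_pos_left this hη
  constructor
  · linarith [show 0 ≤ η * cm⁻¹ * R ^ 2 * (2 / t₀) by positivity]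
  · linarith

theorem natCast_mul_rpow_lt_one_s10 {m : ℕ} {q d : ℝ} (hq₀ : 0 < q) (hq₁ : q < 1)
    (hd : Real.log m / Real.log (1 / q) < d) : (m : ℝ) * q ^ d < 1 := by
  rcases Nat.eq_zero_or_pos m with rfl | hm
  · simp
  have hlog : 0 < Real.log (1 / q) := Real.log_pos (one_lt_one_div hq₀ hq₁)
  rw [div_lt_iff₀ hlog, one_div, Real.log_inv] at hd
  rw [← Real.log_neg_iff (by positivity), Real.log_mul (by positivity) (by positivity),
    Real.log_rpow hq₀]
  linarith

section Dimension
open Set Metric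

section Covers
variable {X : Type*} [EMetricSpace X] [MeasurableSpace X] [BorelSpace X]

theorem hausdorffMeasure_eq_zero_of_forall_covers {s : Set X} {m : ℕ} {q : ℝ≥0} (hq₁ : q < 1)
    {C : ℝ≥0∞} (hC : C ≠ ∞) {t : (k : ℕ) → (Fin k → Fin m) → Set X}
    (hs : ∀ k, s ⊆ ⋃ w, t k w) (ht : ∀ k w, ediam (t k w) ≤ C * q ^ k) {d : ℝ}
    (hd₀ : 0 < d) (hd : (m : ℝ≥0∞) * (q : ℝ≥0∞) ^ d < 1) : μH[d] s = 0 := by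
  have hq : (q : ℝ≥0∞) < 1 := by exact_mod_cast hq₁
  have hr : Tendsto (fun k : ℕ => C * (q : ℝ≥0∞) ^ k) atTop (𝓝 0) := by
    simpa using ENNReal.Tendsto.const_mul (ENNReal.tendsto_pow_atTop_nhds_zero_of_lt_one hq)
      (Or.inr hC)
  have hsum : ∀ k, ∑ w, ediam (t k w) ^ d ≤ C ^ d * ((m : ℝ≥0∞) * (q : ℝ≥0∞) ^ d) ^ k := by
    intro k
    calc ∑ w, ediam (t k w) ^ d ≤ ∑ _w : Fin k → Fin m, (C * (q : ℝ≥0∞) ^ k) ^ d :=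
          Finset.sum_le_sum fun w _ => ENNReal.rpow_le_rpow (ht k w) hd₀.le
      _ = C ^ d * ((m : ℝ≥0∞) * (q : ℝ≥0∞) ^ d) ^ k := by
          rw [Finset.sum_const, Finset.card_univ, Fintype.card_fun, Fintype.card_fin,
            Fintype.card_fin, nsmul_eq_mul, ENNReal.mul_rpow_of_nonneg _ _ hd₀.le,
            ← ENNReal.rpow_natCast_mul, mul_comm (k : ℝ), ENNReal.rpow_mul_natCast]
          push_cast
          ring
  have hlim : Tendsto (fun k : ℕ => C ^ d * ((m : ℝ≥0∞) * (q : ℝ≥0∞) ^ d) ^ k) atTop (𝓝 0) := by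
    simpa using ENNReal.Tendsto.const_mul (ENNReal.tendsto_pow_atTop_nhds_zero_of_lt_one hd)
      (Or.inr (ENNReal.rpow_ne_top_of_nonneg hd₀.le hC))
  refine le_antisymm ?_ zero_le
  calc μH[d] s ≤ liminf (fun k : ℕ => ∑ w, ediam (t k w) ^ d) atTop :=
        Measure.hausdorffMeasure_le_liminf_sum d s _ hr t (Eventually.of_forall (ht ·))
          (Eventually.of_forall hs)
    _ ≤ liminf (fun k : ℕ => C ^ d * ((m : ℝ≥0∞) * (q : ℝ≥0∞) ^ d) ^ k) atTop :=
        liminf_le_liminf (Eventually.of_forall hsum)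
    _ = 0 := hlim.liminf_eq

theorem dimH_le_of_forall_covers {s : Set X} {m : ℕ} {q : ℝ≥0} (hq₀ : 0 < q) (hq₁ : q < 1)
    {C : ℝ≥0∞} (hC : C ≠ ∞) {t : (k : ℕ) → (Fin k → Fin m) → Set X}
    (hs : ∀ k, s ⊆ ⋃ w, t k w) (ht : ∀ k w, ediam (t k w) ≤ C * q ^ k) :
    dimH s ≤ ENNReal.ofReal (Real.log m / Real.log (1 / q)) := by
  have hD : 0 ≤ Real.log m / Real.log (1 / q) :=
    div_nonneg (Real.log_natCast_nonneg m) (Real.log_nonneg (one_le_one_div hq₀ hq₁.le))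
  refine dimH_le fun d hd => le_of_not_gt fun hlt => ?_
  have hlt' : Real.log m / Real.log (1 / q) < d :=
    (ENNReal.ofReal_lt_iff_lt_toReal hD ENNReal.coe_ne_top).1 hlt
  have hd₀ : (0 : ℝ) < d := hD.trans_lt hlt'
  have hmq : (m : ℝ≥0∞) * (q : ℝ≥0∞) ^ (d : ℝ) < 1 := by
    have := natCast_mul_rpow_lt_one_s10 hq₀ hq₁ hlt'
    rw [← ENNReal.coe_rpow_of_nonneg _ hd₀.le]
    exact_mod_cast this
  simp [hausdorffMeasure_eq_zero_of_forall_covers hq₁ hC hs ht hd₀ hmq] at hd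
end Covers

def hutchinsonIter {X ι : Type*} (h : ι → X → X) (B : Set X) : ℕ → Set X
  | 0 => B
  | k + 1 => ⋃ i, h i '' hutchinsonIter h B k

section Hutchinson
variable {X ι : Type*} {h : ι → X → X} {B : Set X}

theorem hutchinsonIter_succ_subset (hB : ∀ i, MapsTo (h i) B B) (k : ℕ) :
    hutchinsonIter h B (k + 1) ⊆ hutchinsonIter h B k := by
  induction k with
  | zero => exact iUnion_subset fun i => (hB i).image_subset
  | succ k ih => exact iUnion_mono fun i => image_mono ih

theorem IsCompact.hutchinsonIter [TopologicalSpace X] [Finite ι] (hB : IsCompact B)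
    (hh : ∀ i, Continuous (h i)) (k : ℕ) : IsCompact (hutchinsonIter h B k) := by
  induction k with
  | zero => exact hB
  | succ k ih => exact isCompact_iUnion fun i => ih.image (hh i)

theorem exists_cover_hutchinsonIter [PseudoEMetricSpace X] {m : ℕ} {h : Fin m → X → X}
    {q : ℝ≥0} (hh : ∀ i, LipschitzWith q (h i)) (k : ℕ) :
    ∃ t : (Fin k → Fin m) → Set X, hutchinsonIter h B k ⊆ ⋃ w, t w ∧
      ∀ w, ediam (t w) ≤ ediam B * q ^ k := by
  induction k with
  | zero => exact ⟨fun _ => B, subset_iUnion (fun _ => B) Fin.elim0, by simp⟩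
  | succ k ih =>
    obtain ⟨t, hBt, ht⟩ := ih
    refine ⟨fun w => h (w 0) '' t (Fin.tail w), ?_, fun w => ?_⟩
    · refine iUnion_subset fun i => (image_mono hBt).trans ?_
      rw [image_iUnion]
      exact iUnion_subset fun w => subset_iUnion_of_subset (Fin.cons i w) (by simp)
    · calc ediam (h (w 0) '' t (Fin.tail w)) ≤ q * ediam (t (Fin.tail w)) :=
            (hh (w 0)).ediam_image_le _
        _ ≤ q * (ediam B * q ^ k) := by gcongr; exact ht _
        _ = ediam B * q ^ (k + 1) := by ring

variable [MeasurableSpace X] [Fintype ι] {p : ι → ℝ≥0∞} {μ : Measure X}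

theorem measure_le_measure_iUnion_image (hh : ∀ i, Measurable (h i)) (hp : ∑ i, p i = 1)
    (hinv : μ = ∑ i, p i • μ.map (h i)) (s : Set X) : μ s ≤ μ (⋃ i, h i '' s) := by
  calc μ s = ∑ i, p i * μ s := by rw [← Finset.sum_mul, hp, one_mul]
    _ ≤ ∑ i, p i * μ.map (h i) (⋃ j, h j '' s) := by
        refine Finset.sum_le_sum fun i _ => mul_le_mul_of_nonneg_left ?_ zero_le
        refine (measure_mono fun x hx => ?_).trans (Measure.le_map_apply (hh i).aemeasurable _)
        exact mem_iUnion.2 ⟨i, mem_image_of_mem _ hx⟩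
    _ = μ (⋃ i, h i '' s) := by
        conv_rhs => rw [hinv]
        simp [Measure.coe_finsetSum]

theorem measure_le_measure_hutchinsonIter (hh : ∀ i, Measurable (h i)) (hp : ∑ i, p i = 1)
    (hinv : μ = ∑ i, p i • μ.map (h i)) (k : ℕ) : μ B ≤ μ (hutchinsonIter h B k) := by
  induction k with
  | zero => rfl
  | succ k ih => exact ih.trans (measure_le_measure_iUnion_image hh hp hinv _)

end Hutchinson

theorem exists_measurableSet_measure_le_dimH_le {X : Type*} [MetricSpace X] [MeasurableSpace X]
    [BorelSpace X] {m : ℕ} {h : Fin m → X → X} {q : ℝ≥0} (hq₀ : 0 < q) (hq₁ : q < 1)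
    (hh : ∀ i, LipschitzWith q (h i)) {p : Fin m → ℝ≥0∞} (hp : ∑ i, p i = 1) {μ : Measure X}
    [IsFiniteMeasure μ] (hinv : μ = ∑ i, p i • μ.map (h i)) {B : Set X} (hB : IsCompact B)
    (hBh : ∀ i, MapsTo (h i) B B) :
    ∃ K, MeasurableSet K ∧ μ B ≤ μ K ∧ dimH K ≤ ENNReal.ofReal (Real.log m / Real.log (1 / q)) := by
  have hcompact := hB.hutchinsonIter fun i => (hh i).continuous
  have hmeas k := (hcompact k).isClosed.measurableSet
  refine ⟨⋂ k, hutchinsonIter h B k, .iInter hmeas, ?_, ?_⟩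
  · rw [(antitone_nat_of_succ_le (hutchinsonIter_succ_subset hBh)).measure_iInter
      (fun k => (hmeas k).nullMeasurableSet) ⟨0, measure_ne_top μ _⟩]
    exact le_iInf
      (measure_le_measure_hutchinsonIter (fun i => (hh i).continuous.measurable) hp hinv)
  · choose t ht using exists_cover_hutchinsonIter (B := B) hh
    exact dimH_le_of_forall_covers hq₀ hq₁ hB.isBounded.ediam_ne_top
      (fun k => (iInter_subset _ k).trans (ht k).1) fun k w => (ht k).2 w

theorem exists_forall_mapsTo_closedBall {X ι : Type*} [PseudoMetricSpace X] [Finite ι]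
    {h : ι → X → X} {q : ℝ≥0} (hq : q < 1) (hh : ∀ i, LipschitzWith q (h i)) (x₀ : X) :
    ∃ ρ₀, ∀ ρ ≥ ρ₀, ∀ i, MapsTo (h i) (closedBall x₀ ρ) (closedBall x₀ ρ) := by
  obtain ⟨c, hc⟩ := (finite_range fun i => dist (h i x₀) x₀).bddAbove
  have hq' : (q : ℝ) < 1 := hq
  refine ⟨c / (1 - q), fun ρ hρ i x hx => ?_⟩
  rw [ge_iff_le, div_le_iff₀ (by linarith)] at hρ
  rw [mem_closedBall] at hx ⊢
  calc dist (h i x) x₀ ≤ dist (h i x) (h i x₀) + dist (h i x₀) x₀ := dist_triangle _ _ _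
    _ ≤ q * dist x x₀ + c := add_le_add ((hh i).dist_le_mul x x₀) (hc (mem_range_self i))
    _ ≤ ρ := by nlinarith [NNReal.coe_nonneg q]

theorem upperHausdorffDim_le_of_measure_iUnion_eq_one {X : Type*} [EMetricSpace X]
    [MeasurableSpace X] {μ : Measure X} {K : ℕ → Set X} (hK : ∀ n, MeasurableSet (K n))
    (hμ : μ (⋃ n, K n) = 1) {D : ℝ≥0∞} (hD : ∀ n, dimH (K n) ≤ D) :
    upperHausdorffDim μ ≤ D := by
  refine (iInf_le_of_le (⋃ n, K n) (iInf₂_le (MeasurableSet.iUnion hK) hμ)).trans ?_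
  rw [dimH_iUnion]
  exact iSup_le hD

theorem upperHausdorffDim_le_of_lipschitzWith {X : Type*} [MetricSpace X] [ProperSpace X]
    [MeasurableSpace X] [BorelSpace X] {m : ℕ} {h : Fin m → X → X} {q : ℝ≥0} (hq₀ : 0 < q)
    (hq₁ : q < 1) (hh : ∀ i, LipschitzWith q (h i)) {p : Fin m → ℝ≥0∞} (hp : ∑ i, p i = 1)
    (μ : Measure X) [IsProbabilityMeasure μ] (hinv : μ = ∑ i, p i • μ.map (h i)) :
    upperHausdorffDim μ ≤ ENNReal.ofReal (Real.log m / Real.log (1 / q)) := by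
  obtain ⟨x₀⟩ := nonempty_of_isProbabilityMeasure μ
  obtain ⟨ρ₀, hρ₀⟩ := exists_forall_mapsTo_closedBall hq₁ hh x₀
  have hK (n : ℕ) := exists_measurableSet_measure_le_dimH_le hq₀ hq₁ hh hp hinv
    (isCompact_closedBall x₀ (max ρ₀ n)) (hρ₀ _ (le_max_left _ _))
  choose K hKmeas hKμ hKdim using hK
  refine upperHausdorffDim_le_of_measure_iUnion_eq_one hKmeas
    (le_antisymm prob_le_one ?_) hKdim
  calc 1 = μ (⋃ n : ℕ, closedBall x₀ n) := by rw [iUnion_closedBall_nat, measure_univ]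
    _ = ⨆ n : ℕ, μ (closedBall x₀ n) :=
        (monotone_nat_of_le_succ fun n => closedBall_subset_closedBall (by simp)).measure_iUnion
    _ ≤ μ (⋃ n, K n) := iSup_le fun n =>
        (measure_mono (closedBall_subset_closedBall (le_max_right _ _))).trans
          ((hKμ n).trans (measure_mono (subset_iUnion K n)))

end Dimension

theorem precond_sgd_robust_regression_hausdorff_dim_bound_general
    (d n b m : ℕ) (hb : 0 < b) (hnm : n = m * b)
    (a : Fin n → EuclideanSpace ℝ (Fin d)) (y : Fin n → ℝ)
    (lamr t₀ R η : ℝ) (hlamr : 0 < lamr) (ht₀ : 0 < t₀)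
    (H : Matrix (Fin d) (Fin d) ℝ) (cm cM : ℝ) (hcm : 0 < cm) (hcmM : cm ≤ cM)
    (hHpd : H.PosDef)
    (hHlow : (H - cm • (1 : Matrix (Fin d) (Fin d) ℝ)).PosSemidef)
    (hHhigh : ((cM • (1 : Matrix (Fin d) (Fin d) ℝ)) - H).PosSemidef)
    (hR : ∀ i, ‖a i‖ ≤ R) (hR0 : 0 ≤ R)
    (hRbound : R < Real.sqrt (lamr * t₀ * cm / (2 * cM)))
    (hη : 0 < η) (hη' : η < cm / (lamr + 2 * R ^ 2 / t₀))
    (ℓ : EuclideanSpace ℝ (Fin d) → EuclideanSpace ℝ (Fin d) × ℝ → ℝ)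
    (hℓ : ∀ w z, ℓ w z = (1 - Real.exp (-(z.2 - ⟪w, z.1⟫) ^ 2 / t₀)) + lamr * ‖w‖ ^ 2 / 2)
    (S : Fin m → Finset (Fin n))
    (hcard : ∀ i, (S i).card = b)
    (p : Fin m → ℝ≥0∞) (hpsum : ∑ i, p i = 1)
    (h : Fin m → EuclideanSpace ℝ (Fin d) → EuclideanSpace ℝ (Fin d))
    (hdef : ∀ i w, h i w = w - (η / b) •
      Matrix.toEuclideanLin H⁻¹ (∑ j ∈ S i, gradient (fun w' => ℓ w' (a j, y j)) w))
    (μ : Measure (EuclideanSpace ℝ (Fin d))) [IsProbabilityMeasure μ]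
    (hinv : μ = ∑ i, p i • μ.map (h i)) :
    upperHausdorffDim μ ≤
      ENNReal.ofReal (Real.log ((n : ℝ) / (b : ℝ)) /
        Real.log (1 / (1 - η * cM⁻¹ * lamr + η * cm⁻¹ * R ^ 2 * (2 / t₀)))) := by
  have hηlam : η * lamr < cm := by
    rw [lt_div_iff₀ (by positivity)] at hη'
    nlinarith [show 0 ≤ η * (2 * R ^ 2 / t₀) by positivity]
  set q := 1 - η * cM⁻¹ * lamr + η * cm⁻¹ * R ^ 2 * (2 / t₀) with hq
  obtain ⟨hq₀, hq₁⟩ : q ∈ Set.Ioo 0 1 :=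
    preconditioned_rate_mem_Ioo ht₀ hcm hcmM hR0 hRbound hη hηlam
  have hloss (j : Fin n) : (fun w' => ℓ w' (a j, y j)) =
      fun w' => rhoExp t₀ (y j - ⟪w', a j⟫) + lamr * ‖w'‖ ^ 2 / 2 :=
    funext fun w' => hℓ w' (a j, y j)
  have hstep (i : Fin m) :
      h i = residualSgdStep (Matrix.toEuclideanLin H⁻¹) (rhoExpDeriv t₀) lamr η (S i) a y := by
    funext w
    simp only [hdef, hloss, gradient_robustLoss, residualSgdStep, hcard]
  have hlip (i : Fin m) : LipschitzWith q.toNNReal (h i) := by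
    refine LipschitzWith.of_dist_le_mul fun w₁ w₂ => ?_
    rw [hstep, dist_eq_norm, dist_eq_norm, Real.coe_toNNReal _ hq₀.le, hq]
    refine (norm_residualSgdStep_sub_le
      (Matrix.isPositive_toEuclideanLin_iff.2 hHpd.inv.posSemidef)
      (hHpd.le_inner_toEuclideanLin_inv (hcm.trans_le hcmM) hHhigh)
      (hHpd.inner_toEuclideanLin_inv_le hcm hHlow) (inv_nonneg.2 hcm.le)
      (abs_rhoExpDeriv_sub_le ht₀) (Finset.card_pos.1 (hcard i ▸ hb)) y (fun j _ => hR j)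
      hlamr.le hη.le ?_ w₁ w₂).trans_eq (by ring)
    rw [mul_inv_le_iff₀ hcm]
    linarith
  have hnb : (n : ℝ) / b = m := by
    rw [hnm, Nat.cast_mul, mul_div_assoc, div_self (by positivity), mul_one]
  rw [hnb, ← Real.coe_toNNReal q hq₀.le]
  exact upperHausdorffDim_le_of_lipschitzWith (Real.toNNReal_pos.2 hq₀)
    (Real.toNNReal_lt_one.2 hq₁) hlip hpsum μ hinv

/-- Non-convex robust regression, preconditioned SGD:
for the loss `ℓ(w,(a,y)) = ρ_exp(y − ⟨w,a⟩) + λ_r‖w‖²/2`,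
`ρ_exp(t) = 1 − e^{−t²/t₀}`, with `R < √(λ_r t₀ m/(2M))`, preconditioner
`mI ⪯ H ⪯ MI` and step-size `0 < η < m/(λ_r + 2R²/t₀)`, any invariant measure
`μ` of the preconditioned SGD iterated function system with batch size `b`
satisfies `dim̄_H μ ≤ log(n/b) / log(1/(1 − η M⁻¹ λ_r + η m⁻¹ R² (2/t₀)))`. -/
theorem precond_sgd_robust_regression_hausdorff_dim_bound
    (d n b m : ℕ) (hb : 0 < b) (hnm : n = m * b)
    (a : Fin n → EuclideanSpace ℝ (Fin d)) (y : Fin n → ℝ)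
    (lamr t₀ R η : ℝ) (hlamr : 0 < lamr) (ht₀ : 0 < t₀)
    (H : Matrix (Fin d) (Fin d) ℝ) (cm cM : ℝ) (hcm : 0 < cm) (hcmM : cm ≤ cM)
    (hHpd : H.PosDef)
    (hHlow : (H - cm • (1 : Matrix (Fin d) (Fin d) ℝ)).PosSemidef)
    (hHhigh : ((cM • (1 : Matrix (Fin d) (Fin d) ℝ)) - H).PosSemidef)
    (hR : ∀ i, ‖a i‖ ≤ R) (hR0 : 0 ≤ R)
    (hRbound : R < Real.sqrt (lamr * t₀ * cm / (2 * cM)))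
    (hη : 0 < η) (hη' : η < cm / (lamr + 2 * R ^ 2 / t₀))
    (ℓ : EuclideanSpace ℝ (Fin d) → EuclideanSpace ℝ (Fin d) × ℝ → ℝ)
    (hℓ : ∀ w z, ℓ w z = (1 - Real.exp (-(z.2 - ⟪w, z.1⟫) ^ 2 / t₀)) + lamr * ‖w‖ ^ 2 / 2)
    (S : Fin m → Finset (Fin n))
    (hcard : ∀ i, (S i).card = b)
    (hdisj : ∀ i j, i ≠ j → Disjoint (S i) (S j))
    (hcover : ∀ j : Fin n, ∃ i, j ∈ S i)
    (p : Fin m → ℝ≥0∞) (hp : ∀ i, 0 < p i) (hpsum : ∑ i, p i = 1)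
    (h : Fin m → EuclideanSpace ℝ (Fin d) → EuclideanSpace ℝ (Fin d))
    (hdef : ∀ i w, h i w = w - (η / b) •
      Matrix.toEuclideanLin H⁻¹ (∑ j ∈ S i, gradient (fun w' => ℓ w' (a j, y j)) w))
    (μ : Measure (EuclideanSpace ℝ (Fin d))) [IsProbabilityMeasure μ]
    (hinv : μ = ∑ i, p i • μ.map (h i)) :
    upperHausdorffDim μ ≤
      ENNReal.ofReal (Real.log ((n : ℝ) / (b : ℝ)) /
        Real.log (1 / (1 - η * cM⁻¹ * lamr + η * cm⁻¹ * R ^ 2 * (2 / t₀)))) :=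
  precond_sgd_robust_regression_hausdorff_dim_bound_general d n b m hb hnm a y lamr t₀ R η hlamr ht₀
    H cm cM hcm hcmM hHpd hHlow hHhigh hR hR0 hRbound hη hη' ℓ hℓ S hcard p hpsum h hdef μ hinv
end
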